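/- Let n ∈ ℕ, let α_j ∈ ℂ and γ_j ∈ ℂ with γ_j ≠ 0 for j = 1,…,n, let β_j ∈ ℂ, and let g_j : ℂ → ℂ be twice differentiable. Set ζ_j = (α_j² + γ_j²)/γ_j and λ_j = −(α_j²γ_j + γ_j³ − α_j³ − α_jγ_j²)/γ_j², and define w : ℂ⁴ → ℂ (variables (η,ξ,q,y)) by w = Σ_{j=1}^{n} g_j(α_j η + γ_j ξ + ζ_j q + λ_j y + β_j). Then w satisfies the linear system: w_{ηη} + w_{ξξ} − w_{ξq} = 0, w_{ξq} − w_{ηq} + w_{ξy} = 0, and w_{ξq} + w_{ηq} − w_{qq} + w_{ηy} = 0 at every point. -/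

import Mathlib

/-!
Each summand of `w` is a plane wave `g (k ⬝ x + β)` with `k = (α, γ, ζ, λ)`, whose second partial
derivative in `x_a, x_b` is `k_a k_b g'' (k ⬝ x + β)`. Each equation of the system therefore holds
summand by summand once `k` satisfies a quadratic relation, and `ζ`, `λ` are chosen exactly so
that all three relations hold.
-/

/-- Partial derivative with respect to the first argument. -/
noncomputable def pd1 (f : ℂ → ℂ → ℂ → ℂ → ℂ) (a b c d : ℂ) : ℂ :=
  deriv (fun s => f s b c d) a

/-- Partial derivative with respect to the second argument. -/
noncomputable def pd2 (f : ℂ → ℂ → ℂ → ℂ → ℂ) (a b c d : ℂ) : ℂ :=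
  deriv (fun s => f a s c d) b

/-- Partial derivative with respect to the third argument. -/
noncomputable def pd3 (f : ℂ → ℂ → ℂ → ℂ → ℂ) (a b c d : ℂ) : ℂ :=
  deriv (fun s => f a b s d) c

/-- Partial derivative with respect to the fourth argument. -/
noncomputable def pd4 (f : ℂ → ℂ → ℂ → ℂ → ℂ) (a b c d : ℂ) : ℂ :=
  deriv (fun s => f a b c s) d

theorem deriv_sum_comp {𝕜 ι : Type*} [NontriviallyNormedField 𝕜] [Fintype ι]
    {g : ι → 𝕜 → 𝕜} (hg : ∀ j, Differentiable 𝕜 (g j)) {A : ι → 𝕜 → 𝕜} {k : ι → 𝕜} {t : 𝕜}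
    (hA : ∀ j, HasDerivAt (A j) (k j) t) :
    deriv (fun s => ∑ j, g j (A j s)) t = ∑ j, k j * deriv (g j) (A j t) :=
  (HasDerivAt.fun_sum fun j _ => mul_comm (k j) _ ▸ (hg j _).hasDerivAt.comp t (hA j)).deriv

section PlaneWaveSum

variable {ι : Type*} [Fintype ι]

def planeWaveSum (g : ι → ℂ → ℂ) (α γ ζ lam β : ι → ℂ) : ℂ → ℂ → ℂ → ℂ → ℂ :=
  fun η ξ q y => ∑ j, g j (α j * η + γ j * ξ + ζ j * q + lam j * y + β j)

variable {g : ι → ℂ → ℂ} (α γ ζ lam β : ι → ℂ)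

theorem pd1_planeWaveSum (hg : ∀ j, Differentiable ℂ (g j)) :
    pd1 (planeWaveSum g α γ ζ lam β)
      = planeWaveSum (fun j x => α j * deriv (g j) x) α γ ζ lam β := by
  funext a b c d
  exact deriv_sum_comp hg fun j => by
    simpa [add_assoc] using
      ((hasDerivAt_id a).const_mul (α j)).add_const (γ j * b + ζ j * c + lam j * d + β j)

theorem pd2_planeWaveSum (hg : ∀ j, Differentiable ℂ (g j)) :
    pd2 (planeWaveSum g α γ ζ lam β)
      = planeWaveSum (fun j x => γ j * deriv (g j) x) α γ ζ lam β := by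
  funext a b c d
  exact deriv_sum_comp hg fun j => by
    simpa [add_assoc] using
      (((hasDerivAt_id b).const_mul (γ j)).const_add (α j * a)).add_const
        (ζ j * c + lam j * d + β j)

theorem pd3_planeWaveSum (hg : ∀ j, Differentiable ℂ (g j)) :
    pd3 (planeWaveSum g α γ ζ lam β)
      = planeWaveSum (fun j x => ζ j * deriv (g j) x) α γ ζ lam β := by
  funext a b c d
  exact deriv_sum_comp hg fun j => by
    simpa [add_assoc] using
      (((hasDerivAt_id c).const_mul (ζ j)).const_add (α j * a + γ j * b)).add_const
        (lam j * d + β j)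

theorem pd4_planeWaveSum (hg : ∀ j, Differentiable ℂ (g j)) :
    pd4 (planeWaveSum g α γ ζ lam β)
      = planeWaveSum (fun j x => lam j * deriv (g j) x) α γ ζ lam β := by
  funext a b c d
  exact deriv_sum_comp hg fun j => by
    simpa [add_assoc] using
      (((hasDerivAt_id d).const_mul (lam j)).const_add (α j * a + γ j * b + ζ j * c)).add_const
        (β j)

end PlaneWaveSum

theorem dispersion_relations {K : Type*} [Field K] {α γ ζ lam : K} (hγ : γ ≠ 0)
    (hζ : ζ = (α ^ 2 + γ ^ 2) / γ)
    (hlam : lam = -((α ^ 2 * γ + γ ^ 3 - α ^ 3 - α * γ ^ 2) / γ ^ 2)) :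
    α * α + γ * γ - γ * ζ = 0 ∧ γ * ζ - α * ζ + γ * lam = 0
      ∧ γ * ζ + α * ζ - ζ * ζ + α * lam = 0 := by
  subst hζ hlam
  refine ⟨?_, ?_, ?_⟩ <;> field_simp <;> ring

/-- the functional-sum ansatz solves the linear system arising
from the Legendre-transformed mixed heavenly equation (θ = 1). -/
theorem stmt16 (n : ℕ) (α γ : Fin n → ℂ) (hγ : ∀ j, γ j ≠ 0) (β : Fin n → ℂ)
    (g : Fin n → ℂ → ℂ) (hg : ∀ j, ContDiff ℂ 2 (g j))
    (ζ lam : Fin n → ℂ)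
    (hζ : ∀ j, ζ j = ((α j) ^ 2 + (γ j) ^ 2) / γ j)
    (hlam : ∀ j, lam j =
      -(((α j) ^ 2 * γ j + (γ j) ^ 3 - (α j) ^ 3 - α j * (γ j) ^ 2) / (γ j) ^ 2))
    (w : ℂ → ℂ → ℂ → ℂ → ℂ)
    (hw : w = fun η ξ q y =>
      ∑ j : Fin n, g j (α j * η + γ j * ξ + ζ j * q + lam j * y + β j)) :
    ∀ η ξ q y : ℂ,
      pd1 (pd1 w) η ξ q y + pd2 (pd2 w) η ξ q y - pd2 (pd3 w) η ξ q y = 0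
      ∧ pd2 (pd3 w) η ξ q y - pd1 (pd3 w) η ξ q y + pd2 (pd4 w) η ξ q y = 0
      ∧ pd2 (pd3 w) η ξ q y + pd1 (pd3 w) η ξ q y - pd3 (pd3 w) η ξ q y
          + pd1 (pd4 w) η ξ q y = 0 := by
  have hg₁ (j) : Differentiable ℂ (g j) := (hg j).differentiable two_ne_zero
  have hg₂ (k : Fin n → ℂ) (j) : Differentiable ℂ (fun x => k j * deriv (g j) x) :=
    (hg j).differentiable_deriv_two.const_mul (k j)
  change w = planeWaveSum g α γ ζ lam β at hw
  subst hw
  intro η ξ q y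
  simp only [pd1_planeWaveSum, pd2_planeWaveSum, pd3_planeWaveSum, pd4_planeWaveSum, hg₁, hg₂,
    implies_true, planeWaveSum, deriv_const_mul_field', ← Finset.sum_add_distrib,
    ← Finset.sum_sub_distrib]
  refine ⟨?_, ?_, ?_⟩ <;> refine Finset.sum_eq_zero fun j _ => ?_ <;>
    set G := deriv (deriv (g j)) (α j * η + γ j * ξ + ζ j * q + lam j * y + β j) <;>
    obtain ⟨h₁, h₂, h₃⟩ := dispersion_relations (hγ j) (hζ j) (hlam j)
  · linear_combination G * h₁
  · linear_combination G * h₂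
  · linear_combination G * h₃
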